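/- arXiv:1305.3570 — 6 statements merged into one kernel-verified Lean document; each statement's English description precedes it below -/
import Mathlib

section
/- For any simple graph G with m > 0 edges, Σ_{i∈V} d_i² ≤ m·q, where q is the largest eigenvalue of the signless Laplacian Q = D + A. -/
/-!
With `Q = D + A`, the quadratic form is `2 xᵀQx = ∑_{i ~ j} (x_i + x_j)²`, summed over
the `2m` ordered pairs of adjacent vertices, while `∑_{i ~ j} (d_i + d_j) = 2 ∑ d_i²`.
Cauchy–Schwarz over these pairs gives `(∑ d_i²)² ≤ m · dᵀQd`, and the Rayleigh bound
`dᵀQd ≤ q · ∑ d_i²` finishes after dividing by `∑ d_i² > 0`.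
-/

open Finset Matrix
open scoped MatrixOrder

lemma Matrix.IsHermitian.dotProduct_mulVec_le_of_eigenvalues_le {n : Type*} [Fintype n]
    [DecidableEq n] {A : Matrix n n ℝ} (hA : A.IsHermitian) {r : ℝ}
    (h : ∀ i, hA.eigenvalues i ≤ r) (x : n → ℝ) :
    x ⬝ᵥ (A *ᵥ x) ≤ r * (x ⬝ᵥ x) := by
  have hle : A ≤ algebraMap ℝ (Matrix n n ℝ) r := by
    refine le_algebraMap_of_spectrum_le (fun μ hμ => ?_) hA
    rw [hA.spectrum_real_eq_range_eigenvalues] at hμ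
    obtain ⟨i, rfl⟩ := hμ
    exact h i
  simpa only [star_trivial, sub_mulVec, dotProduct_sub, Algebra.algebraMap_eq_smul_one,
    smul_mulVec, one_mulVec, dotProduct_smul, smul_eq_mul, sub_nonneg]
    using (Matrix.le_iff.mp hle).dotProduct_mulVec_nonneg x

namespace SimpleGraph

variable {V : Type*} [Fintype V] (G : SimpleGraph V) [DecidableRel G.Adj]

def signlessLapMatrix (R : Type*) [DecidableEq V] [AddMonoidWithOne R] : Matrix V V R :=
  G.degMatrix R + G.adjMatrix R

lemma sum_sum_neighborFinset_comm {M : Type*} [AddCommMonoid M] (f : V → V → M) :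
    ∑ i, ∑ j ∈ G.neighborFinset i, f i j = ∑ i, ∑ j ∈ G.neighborFinset i, f j i := by
  simp only [neighborFinset_eq_filter, sum_filter]
  rw [sum_comm]
  simp only [G.adj_comm]

lemma sum_sum_neighborFinset_const {M : Type*} [AddCommMonoid M] (f : V → M) :
    ∑ i, ∑ _j ∈ G.neighborFinset i, f i = ∑ i, G.degree i • f i := by
  simp only [sum_const, card_neighborFinset_eq_degree]

lemma sum_sum_neighborFinset_add {R : Type*} [CommSemiring R] (x : V → R) :
    ∑ i, ∑ j ∈ G.neighborFinset i, (x i + x j) = 2 * ∑ i, G.degree i * x i := by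
  have h := G.sum_sum_neighborFinset_comm fun i _ => x i
  beta_reduce at h
  simp only [sum_add_distrib, ← h, sum_sum_neighborFinset_const, nsmul_eq_mul]
  ring

lemma two_mul_dotProduct_signlessLapMatrix_mulVec [DecidableEq V] {R : Type*} [CommRing R]
    (x : V → R) :
    2 * (x ⬝ᵥ (G.signlessLapMatrix R *ᵥ x)) =
      ∑ i, ∑ j ∈ G.neighborFinset i, (x i + x j) ^ 2 := by
  have h := G.sum_sum_neighborFinset_comm fun i _ => x i ^ 2
  beta_reduce at h
  calc 2 * (x ⬝ᵥ (G.signlessLapMatrix R *ᵥ x))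
      = 2 * (∑ i, G.degree i * x i ^ 2 + ∑ i, x i * ∑ j ∈ G.neighborFinset i, x j) := by
        simp only [dotProduct, signlessLapMatrix, add_mulVec, Pi.add_apply,
          degMatrix_mulVec_apply, adjMatrix_mulVec_apply, mul_add, sum_add_distrib]
        congr 2
        exact sum_congr rfl fun i _ => by ring
    _ = ∑ i, ∑ j ∈ G.neighborFinset i, (x i + x j) ^ 2 := by
        simp only [add_sq, sum_add_distrib, ← h, sum_sum_neighborFinset_const, nsmul_eq_mul,
          mul_assoc, ← mul_sum]
        ring

lemma card_sigma_neighborFinset :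
    #(univ.sigma fun i => G.neighborFinset i) = 2 * #G.edgeFinset := by
  rw [card_sigma]
  simp only [card_neighborFinset_eq_degree, sum_degrees_eq_twice_card_edges]

lemma sum_degree_sq_pos (h : G ≠ ⊥) : 0 < ∑ i, G.degree i ^ 2 := by
  obtain ⟨u, v, huv⟩ := G.ne_bot_iff_exists_adj.mp h
  have hu : 0 < G.degree u := G.degree_pos_iff_exists_adj u |>.mpr ⟨v, huv⟩
  exact (pow_pos hu 2).trans_le
    (single_le_sum (fun i _ => Nat.zero_le (G.degree i ^ 2)) (mem_univ u))

lemma sq_sum_degree_mul_le_card_edgeFinset_mul [DecidableEq V] {R : Type*} [Field R]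
    [LinearOrder R] [IsStrictOrderedRing R] (x : V → R) :
    (∑ i, G.degree i * x i) ^ 2 ≤
      #G.edgeFinset * (x ⬝ᵥ (G.signlessLapMatrix R *ᵥ x)) := by
  have h := sq_sum_le_card_mul_sum_sq (s := univ.sigma fun i => G.neighborFinset i)
    (f := fun p => x p.1 + x p.2)
  rw [sum_sigma, sum_sigma, card_sigma_neighborFinset, sum_sum_neighborFinset_add,
    ← two_mul_dotProduct_signlessLapMatrix_mulVec] at h
  push_cast at h
  linarith

end SimpleGraph

theorem sum_sq_degree_le_m_mul_q {V : Type*} [Fintype V] [DecidableEq V]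
    (G : SimpleGraph V) [DecidableRel G.Adj]
    (m : ℕ) (hm : m = G.edgeFinset.card) (hm0 : 0 < m)
    (hQ : (Matrix.diagonal (fun v => (G.degree v : ℝ)) + G.adjMatrix ℝ).IsHermitian)
    (q : ℝ) (hq : q = ⨆ i, hQ.eigenvalues i) :
    ∑ i, (G.degree i : ℝ) ^ 2 ≤ m * q := by
  subst hm
  let d : V → ℝ := fun i => G.degree i
  have hdd : d ⬝ᵥ d = ∑ i, (G.degree i : ℝ) ^ 2 := sum_congr rfl fun i _ => (sq (d i)).symm
  have hS : 0 < d ⬝ᵥ d := by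
    rw [hdd]
    exact_mod_cast G.sum_degree_sq_pos (G.edgeFinset_nonempty.mp (card_pos.mp hm0))
  have hCS : (d ⬝ᵥ d) ^ 2 ≤ #G.edgeFinset * (d ⬝ᵥ (G.signlessLapMatrix ℝ *ᵥ d)) :=
    G.sq_sum_degree_mul_le_card_edgeFinset_mul d
  -- `G.signlessLapMatrix ℝ` is definitionally the matrix of `hQ`.
  have hray : d ⬝ᵥ (G.signlessLapMatrix ℝ *ᵥ d) ≤ q * (d ⬝ᵥ d) :=
    hQ.dotProduct_mulVec_le_of_eigenvalues_le
      (fun i => hq ▸ le_ciSup (Set.finite_range _).bddAbove i) d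
  rw [← hdd]
  refine le_of_mul_le_mul_right ?_ hS
  calc d ⬝ᵥ d * d ⬝ᵥ d = (d ⬝ᵥ d) ^ 2 := (sq _).symm
    _ ≤ #G.edgeFinset * (q * d ⬝ᵥ d) := hCS.trans (by gcongr)
    _ = #G.edgeFinset * q * d ⬝ᵥ d := (mul_assoc _ _ _).symm
end

section
/- For any simple graph G with n vertices and m > 0 edges, β(G)² ≥ ν(G), where β = μ·n/(2m) and μ is the largest adjacency eigenvalue; equivalently μ² ≥ (Σ_i d_i²)/n. -/
/-!
In an orthonormal eigenbasis of the adjacency matrix `A`, the Euclidean norm of `A x` is at most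
`max_k |λ_k| · ‖x‖`. Since `A` is entrywise nonnegative, replacing an eigenvector `v` by `|v|`
can only increase the Rayleigh quotient, so every `|λ_k|` is bounded by the largest eigenvalue `μ`.
Applied to the all-ones vector, for which `A 𝟙` is the degree vector, this gives
`∑ d_i² ≤ μ² n`; the inequality `ν ≤ β²` is the same statement rescaled by `n / (4 m²)`.
-/

open Finset Matrix

theorem Matrix.abs_dotProduct_mulVec_le {R n : Type*} [CommRing R] [LinearOrder R]
    [IsStrictOrderedRing R] [Fintype n] {A : Matrix n n R} (hnn : ∀ i j, 0 ≤ A i j)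
    (x y : n → R) : |x ⬝ᵥ (A *ᵥ y)| ≤ |x| ⬝ᵥ (A *ᵥ |y|) := by
  refine (abs_sum_le_sum_abs _ _).trans (sum_le_sum fun i _ => ?_)
  rw [abs_mul, Pi.abs_apply]
  refine mul_le_mul_of_nonneg_left ((abs_sum_le_sum_abs _ _).trans_eq ?_) (abs_nonneg _)
  exact sum_congr rfl fun j _ => by rw [abs_mul, abs_of_nonneg (hnn i j), Pi.abs_apply]

theorem EuclideanSpace.norm_toLp_abs {n : Type*} [Fintype n] (x : n → ℝ) :
    ‖WithLp.toLp 2 |x|‖ = ‖WithLp.toLp 2 x‖ := by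
  simp [EuclideanSpace.norm_eq]

namespace Matrix.IsHermitian

section RCLike

variable {𝕜 n : Type*} [RCLike 𝕜] [Fintype n] [DecidableEq n] {A : Matrix n n 𝕜}
  (hA : A.IsHermitian)

theorem eigenvectorBasis_repr_mulVec (x : n → 𝕜) (k : n) :
    hA.eigenvectorBasis.repr (WithLp.toLp 2 (A *ᵥ x)) k =
      hA.eigenvalues k * hA.eigenvectorBasis.repr (WithLp.toLp 2 x) k := by
  have hT := isSymmetric_toEuclideanLin_iff.mpr hA (hA.eigenvectorBasis k) (WithLp.toLp 2 x)
  simp only [toLpLin_apply, hA.mulVec_eigenvectorBasis] at hT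
  rw [OrthonormalBasis.repr_apply_apply, OrthonormalBasis.repr_apply_apply, ← hT,
    WithLp.toLp_smul, WithLp.toLp_ofLp, RCLike.real_smul_eq_coe_smul (K := 𝕜), inner_smul_left,
    RCLike.conj_ofReal]

theorem norm_mulVec_sq_le {c : ℝ} (h : ∀ k, |hA.eigenvalues k| ≤ c) (x : n → 𝕜) :
    ‖WithLp.toLp 2 (A *ᵥ x)‖ ^ 2 ≤ c ^ 2 * ‖WithLp.toLp 2 x‖ ^ 2 := by
  rw [← hA.eigenvectorBasis.repr.norm_map, ← hA.eigenvectorBasis.repr.norm_map (WithLp.toLp 2 x),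
    EuclideanSpace.norm_sq_eq, EuclideanSpace.norm_sq_eq, mul_sum]
  refine sum_le_sum fun k _ => ?_
  rw [eigenvectorBasis_repr_mulVec, norm_mul, mul_pow, RCLike.norm_ofReal, sq_abs]
  exact mul_le_mul_of_nonneg_right (sq_le_sq' (neg_le_of_abs_le (h k)) (le_of_abs_le (h k)))
    (sq_nonneg _)

theorem re_inner_mulVec_le {c : ℝ} (h : ∀ k, hA.eigenvalues k ≤ c) (x : n → 𝕜) :
    RCLike.re (inner 𝕜 (WithLp.toLp 2 x) (WithLp.toLp 2 (A *ᵥ x))) ≤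
      c * ‖WithLp.toLp 2 x‖ ^ 2 := by
  rw [← hA.eigenvectorBasis.repr.inner_map_map, ← hA.eigenvectorBasis.repr.norm_map,
    EuclideanSpace.norm_sq_eq, mul_sum, PiLp.inner_apply, map_sum]
  refine sum_le_sum fun k _ => ?_
  rw [eigenvectorBasis_repr_mulVec, RCLike.inner_apply, mul_assoc, RCLike.mul_conj,
    ← RCLike.ofReal_pow, ← RCLike.ofReal_mul, RCLike.ofReal_re]
  exact mul_le_mul_of_nonneg_right (h k) (sq_nonneg _)

end RCLike

theorem abs_eigenvalues_le_of_nonneg {n : Type*} [Fintype n] [DecidableEq n]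
    {A : Matrix n n ℝ} (hA : A.IsHermitian) (hnn : ∀ i j, 0 ≤ A i j) {c : ℝ}
    (h : ∀ k, hA.eigenvalues k ≤ c) (k : n) : |hA.eigenvalues k| ≤ c := by
  set v : n → ℝ := (hA.eigenvectorBasis k).ofLp
  have hvAv : hA.eigenvalues k = v ⬝ᵥ (A *ᵥ v) := by simpa using hA.eigenvalues_eq k
  have hv : ‖WithLp.toLp 2 v‖ = 1 := hA.eigenvectorBasis.orthonormal.1 k
  calc |hA.eigenvalues k| = |v ⬝ᵥ (A *ᵥ v)| := by rw [hvAv]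
    _ ≤ |v| ⬝ᵥ (A *ᵥ |v|) := abs_dotProduct_mulVec_le hnn v v
    _ = inner ℝ (WithLp.toLp 2 |v|) (WithLp.toLp 2 (A *ᵥ |v|)) := by
      rw [EuclideanSpace.inner_toLp_toLp, star_trivial, dotProduct_comm]
    _ ≤ c * ‖WithLp.toLp 2 |v|‖ ^ 2 := hA.re_inner_mulVec_le h |v|
    _ = c := by rw [EuclideanSpace.norm_toLp_abs, hv, one_pow, mul_one]

end Matrix.IsHermitian

theorem SimpleGraph.sum_degree_sq_le {V : Type*} [Fintype V] [DecidableEq V]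
    (G : SimpleGraph V) [DecidableRel G.Adj] (hA : (G.adjMatrix ℝ).IsHermitian) :
    ∑ i, (G.degree i : ℝ) ^ 2 ≤ (⨆ k, hA.eigenvalues k) ^ 2 * Fintype.card V := by
  have hnn (i j : V) : 0 ≤ G.adjMatrix ℝ i j := by
    rw [adjMatrix_apply]; split_ifs <;> norm_num
  have hle (k : V) : hA.eigenvalues k ≤ ⨆ k, hA.eigenvalues k :=
    le_ciSup (Set.finite_range _).bddAbove k
  have h := hA.norm_mulVec_sq_le (hA.abs_eigenvalues_le_of_nonneg hnn hle) (fun _ => 1)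
  simpa [EuclideanSpace.real_norm_sq_eq] using h

theorem beta_sq_ge_nu_general {V : Type*} [Fintype V] [DecidableEq V]
    (G : SimpleGraph V) [DecidableRel G.Adj]
    (n m : ℕ) (hn : n = Fintype.card V)
    (hA : (G.adjMatrix ℝ).IsHermitian)
    (μ : ℝ) (hμ : μ = ⨆ i, hA.eigenvalues i)
    (β ν : ℝ) (hβ : β = μ * n / (2 * m))
    (hν : ν = n * (∑ i, (G.degree i : ℝ) ^ 2) / (4 * m ^ 2)) :
    ν ≤ β ^ 2 ∧ (∑ i, (G.degree i : ℝ) ^ 2) / n ≤ μ ^ 2 := by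
  have hdeg : ∑ i, (G.degree i : ℝ) ^ 2 ≤ μ ^ 2 * n := by
    rw [hμ, hn]; exact G.sum_degree_sq_le hA
  constructor
  · rw [hν, hβ, div_pow, mul_pow, show ((2 : ℝ) * m) ^ 2 = 4 * m ^ 2 by ring]
    refine div_le_div_of_nonneg_right ?_ (by positivity)
    calc (n : ℝ) * ∑ i, (G.degree i : ℝ) ^ 2 ≤ n * (μ ^ 2 * n) := by gcongr
      _ = μ ^ 2 * n ^ 2 := by ring
  · exact div_le_of_le_mul₀ (Nat.cast_nonneg n) (sq_nonneg μ) hdeg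

theorem beta_sq_ge_nu {V : Type*} [Fintype V] [DecidableEq V]
    (G : SimpleGraph V) [DecidableRel G.Adj]
    (n m : ℕ) (hn : n = Fintype.card V) (hm : m = G.edgeFinset.card) (hm0 : 0 < m)
    (hA : (G.adjMatrix ℝ).IsHermitian)
    (μ : ℝ) (hμ : μ = ⨆ i, hA.eigenvalues i)
    (β ν : ℝ) (hβ : β = μ * n / (2 * m))
    (hν : ν = n * (∑ i, (G.degree i : ℝ) ^ 2) / (4 * m ^ 2)) :
    ν ≤ β ^ 2 ∧ (∑ i, (G.degree i : ℝ) ^ 2) / n ≤ μ ^ 2 :=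
  beta_sq_ge_nu_general G n m hn hA μ hμ β ν hβ hν
end

section
/- For any simple graph G, the largest adjacency eigenvalue μ satisfies μ ≥ (Σ_{ij∈E} √(d_i d_j))/m; consequently β(G) ≥ ε(G). -/
/-!
Rayleigh quotient with the test vector `x i = √(d i)`: since `μ` dominates every eigenvalue,
`μ • 1 - A` is positive semidefinite, so `xᵀ A x ≤ μ xᵀ x`. Here `xᵀ x = Σ d i = 2m` and
`xᵀ A x = 2 Σ_{ij ∈ E} √(d i d j)`; and `ε = (n / 2m) · (Σ_{ij ∈ E} √(d i d j)) / m`.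
-/

open Finset Matrix

section Rayleigh

open scoped MatrixOrder ComplexOrder

variable {𝕜 n : Type*} [RCLike 𝕜] [Fintype n] [DecidableEq n] {A : Matrix n n 𝕜}

theorem Matrix.IsHermitian.le_algebraMap_iSup_eigenvalues (hA : A.IsHermitian) :
    A ≤ algebraMap ℝ (Matrix n n 𝕜) (⨆ i, hA.eigenvalues i) := by
  refine le_algebraMap_of_spectrum_le (fun r hr => ?_) hA.isSelfAdjoint
  obtain ⟨i, rfl⟩ := hA.spectrum_real_eq_range_eigenvalues ▸ hr
  exact le_ciSup (Set.finite_range _).bddAbove i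

theorem Matrix.IsHermitian.dotProduct_mulVec_le_iSup_eigenvalues_mul (hA : A.IsHermitian)
    (x : n → 𝕜) :
    star x ⬝ᵥ (A *ᵥ x) ≤ ((⨆ i, hA.eigenvalues i : ℝ) : 𝕜) * (star x ⬝ᵥ x) := by
  have h := (Matrix.le_iff.mp hA.le_algebraMap_iSup_eigenvalues).dotProduct_mulVec_nonneg x
  rw [sub_mulVec, dotProduct_sub, sub_nonneg] at h
  simpa [Algebra.algebraMap_eq_smul_one, smul_mulVec, dotProduct_smul] using h

end Rayleigh

namespace SimpleGraph

variable {V : Type*} [Fintype V] (G : SimpleGraph V) [DecidableRel G.Adj]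

theorem sqrt_degree_dotProduct_self :
    (fun i => √(G.degree i : ℝ)) ⬝ᵥ (fun i => √(G.degree i : ℝ)) = 2 * #G.edgeFinset := by
  simp only [dotProduct, Real.mul_self_sqrt (Nat.cast_nonneg _)]
  exact_mod_cast G.sum_degrees_eq_twice_card_edges

variable [DecidableEq V]

theorem sum_dart_edge {M : Type*} [AddCommMonoid M] (F : Sym2 V → M) :
    ∑ d : G.Dart, F d.edge = 2 • ∑ e ∈ G.edgeFinset, F e := by
  rw [← sum_fiberwise_of_maps_to (g := Dart.edge) fun d _ => mem_edgeFinset.2 d.edge_mem,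
    smul_sum]
  refine sum_congr rfl fun e he => ?_
  rw [sum_congr rfl fun d hd => congrArg F (mem_filter.1 hd).2, sum_const,
    G.dart_edge_fiber_card e (mem_edgeFinset.1 he)]

theorem sum_sum_ite_adj {M : Type*} [AddCommMonoid M] (F : Sym2 V → M) :
    ∑ i, ∑ j, (if G.Adj i j then F s(i, j) else 0) = 2 • ∑ e ∈ G.edgeFinset, F e := by
  rw [← sum_dart_edge, ← Fintype.sum_prod_type', ← sum_filter]
  exact sum_bij' (fun p hp ↦ ⟨p, (mem_filter.1 hp).2⟩) (fun d _ ↦ d.toProd)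
    (by simp) (by simp) (by simp) (by simp) (by simp)

theorem sqrt_degree_dotProduct_adjMatrix_mulVec :
    (fun i => √(G.degree i : ℝ)) ⬝ᵥ (G.adjMatrix ℝ *ᵥ fun i => √(G.degree i : ℝ)) =
      2 * ∑ e ∈ G.edgeFinset,
        Sym2.lift ⟨fun i j => √((G.degree i : ℝ) * G.degree j),
          fun i j => by simp [mul_comm]⟩ e := by
  rw [dotProduct_mulVec_adjMatrix, two_mul, ← two_nsmul, ← sum_sum_ite_adj]
  simp only [Sym2.lift_mk, Real.sqrt_mul (Nat.cast_nonneg _)]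

end SimpleGraph

theorem mu_ge_avg_sqrt_edge_deg {V : Type*} [Fintype V] [DecidableEq V]
    (G : SimpleGraph V) [DecidableRel G.Adj]
    (n m : ℕ) (hm : m = G.edgeFinset.card) (hm0 : 0 < m)
    (hA : (G.adjMatrix ℝ).IsHermitian)
    (μ : ℝ) (hμ : μ = ⨆ i, hA.eigenvalues i)
    (β ε : ℝ) (hβ : β = μ * n / (2 * m))
    (hε : ε = n * (∑ e ∈ G.edgeFinset,
        Sym2.lift ⟨fun i j => Real.sqrt ((G.degree i : ℝ) * (G.degree j : ℝ)),
          fun i j => by simp [mul_comm]⟩ e) / (2 * m ^ 2)) :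
    (∑ e ∈ G.edgeFinset,
        Sym2.lift ⟨fun i j => Real.sqrt ((G.degree i : ℝ) * (G.degree j : ℝ)),
          fun i j => by simp [mul_comm]⟩ e) / m ≤ μ ∧ ε ≤ β := by
  set S := ∑ e ∈ G.edgeFinset,
    Sym2.lift ⟨fun i j => Real.sqrt ((G.degree i : ℝ) * (G.degree j : ℝ)),
      fun i j => by simp [mul_comm]⟩ e
  have hRayleigh : 2 * S ≤ μ * (2 * m) := by
    have h := hA.dotProduct_mulVec_le_iSup_eigenvalues_mul fun i => √(G.degree i : ℝ)
    simp only [star_trivial, RCLike.ofReal_real_eq_id, id] at h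
    rwa [G.sqrt_degree_dotProduct_adjMatrix_mulVec, G.sqrt_degree_dotProduct_self, ← hμ,
      ← hm] at h
  have hS : S / m ≤ μ := by
    rw [div_le_iff₀ (by exact_mod_cast hm0)]
    linarith
  refine ⟨hS, ?_⟩
  calc ε = n / (2 * m) * (S / m) := by rw [hε]; ring
    _ ≤ n / (2 * m) * μ := by gcongr
    _ = β := by rw [hβ]; ring
end

section
/- Let G be a graph on n vertices with m edges and no k-clique, and define θ by (θ-2)n/θ = (Σ_i d_i²)/m - n (equivalently 2m = (θ-1)n²/(θν)). Then for all h with 2 ≤ h, the number of (h+1)-cliques satisfies c_{h+1}/c_h ≥ (θ - h)n/(θ(h+1)) whenever c_h > 0; consequently θ ≤ k - 1. -/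
/-!
For an `h`-clique `S` let `d(S)` be the number of common neighbours of `S`, i.e. of
`(h+1)`-cliques containing `S`. Double counting gives `∑ d(S) = (h+1) c_{h+1}` and
`∑ d(S)² = ∑_K ∑_{x ∈ K} d(K \ x) ≤ n c_{h+1} + h (h+2) c_{h+2}`, the sum running over the
`(h+1)`-cliques `K`, and Cauchy–Schwarz turns these into the Moon–Moser inequality
`((h+1) c_{h+1})² ≤ c_h (n c_{h+1} + h (h+2) c_{h+2})`.

For `h = 1` the bound on `∑ d(S)²` reads `∑ dᵢ² ≤ n m + 3 c_3`, which by the definition of `θ` is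
the ratio bound for `h = 2`; the Moon–Moser inequality carries the ratio bound from `h` to `h + 1`.
If `θ > k - 1`, the ratio bounds make every `c_j` with `2 ≤ j ≤ k` positive, so `G` has a
`k`-clique.
-/

open Finset

lemma ratio_bound_succ {n θ a b c : ℝ} {h : ℕ} (hh : 0 < h) (hθ : θ ≠ 0) (ha : 0 < a)
    (hb : 0 < b) (hmm : ((h + 1) * b) ^ 2 ≤ a * (n * b + h * ((h + 2) * c)))
    (hr : (θ - h) * n / (θ * (h + 1)) ≤ b / a) :
    (θ - (h + 1)) * n / (θ * (h + 1 + 1)) ≤ c / b := by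
  have hmm_div : (h + 1) ^ 2 * (b / a) ≤ n + h * (h + 2) * (c / b) := by
    have : (h + 1) ^ 2 * (b / a) - (n + h * (h + 2) * (c / b)) =
        (((h + 1) * b) ^ 2 - a * (n * b + h * ((h + 2) * c))) / (a * b) := by
      field_simp
    rw [← sub_nonpos, this]
    exact div_nonpos_of_nonpos_of_nonneg (sub_nonpos.2 hmm) (mul_pos ha hb).le
  refine le_of_mul_le_mul_left ?_ (by positivity : (0 : ℝ) < h * (h + 2))
  calc h * (h + 2) * ((θ - (h + 1)) * n / (θ * (h + 1 + 1)))
      = (h + 1) ^ 2 * ((θ - h) * n / (θ * (h + 1))) - n := by field_simp; ring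
    _ ≤ (h + 1) ^ 2 * (b / a) - n := by gcongr
    _ ≤ h * (h + 2) * (c / b) := by linarith

lemma pos_of_ratio_bound {c : ℕ → ℕ} {n θ : ℝ} (hn : 0 < n) (hc2 : 0 < c 2)
    (hr : ∀ h : ℕ, 2 ≤ h → 0 < c h → (θ - h) * n / (θ * (h + 1)) ≤ (c (h + 1) : ℝ) / c h) :
    ∀ j : ℕ, 2 ≤ j → (j : ℝ) < θ + 1 → 0 < c j := by
  intro j hj
  induction j, hj using Nat.le_induction with
  | base => exact fun _ => hc2
  | succ j hj ih =>
    intro hjθ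
    push_cast at hjθ
    have hj' : (2 : ℝ) ≤ j := by exact_mod_cast hj
    have hcj := ih (by linarith)
    have hpos : 0 < (θ - j) * n / (θ * (j + 1)) := by
      have : 0 < θ - j := by linarith
      have : 0 < θ := by linarith
      positivity
    have := hpos.trans_le (hr j hj hcj)
    by_contra! h0
    simp [Nat.le_zero.1 h0] at this

namespace SimpleGraph

variable {V : Type*} [Fintype V]

/-- For an `h`-clique `S` these are the vertices `u` with `insert u S` an `(h+1)`-clique. -/
def commonNeighborFinset (G : SimpleGraph V) [DecidableRel G.Adj] (S : Finset V) : Finset V :=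
  {u | ∀ v ∈ S, G.Adj u v}

variable {G : SimpleGraph V} [DecidableRel G.Adj]

@[simp]
lemma mem_commonNeighborFinset {S : Finset V} {u : V} :
    u ∈ G.commonNeighborFinset S ↔ ∀ v ∈ S, G.Adj u v := by
  simp [commonNeighborFinset]

lemma commonNeighborFinset_singleton (v : V) :
    G.commonNeighborFinset {v} = G.neighborFinset v := by
  ext u
  simp [G.adj_comm u v]

lemma two_le_of_cliqueFree {k : ℕ} (hE : 0 < #G.edgeFinset) (hfree : G.CliqueFree k) :
    2 ≤ k := by
  by_contra! hk
  have hbot := cliqueFree_two.1 (hfree.mono (by omega : k ≤ 2))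
  rw [← edgeFinset_eq_empty] at hbot
  simp [hbot] at hE

variable [DecidableEq V]

lemma sum_cliqueFinset_one {M : Type*} [AddCommMonoid M] (f : Finset V → M) :
    ∑ S ∈ G.cliqueFinset 1, f S = ∑ v, f {v} := by
  have : G.cliqueFinset 1 = univ.map ⟨singleton, singleton_injective⟩ := by
    ext S
    simp [eq_comm]
  rw [this, sum_map]
  rfl

lemma sum_cliqueFinset_sum_commonNeighborFinset {M : Type*} [AddCommMonoid M] (h : ℕ)
    (f : Finset V → V → M) :
    ∑ S ∈ G.cliqueFinset h, ∑ u ∈ G.commonNeighborFinset S, f S u =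
      ∑ K ∈ G.cliqueFinset (h + 1), ∑ u ∈ K, f (K.erase u) u := by
  rw [sum_sigma', sum_sigma']
  refine sum_nbij' (fun p => ⟨insert p.2 p.1, p.2⟩) (fun p => ⟨p.1.erase p.2, p.2⟩)
    ?_ ?_ ?_ ?_ ?_
  · rintro ⟨S, u⟩ hp
    simp only [mem_sigma, mem_cliqueFinset_iff, mem_commonNeighborFinset] at hp ⊢
    exact ⟨hp.1.insert hp.2, mem_insert_self u S⟩
  · rintro ⟨K, u⟩ hp
    simp only [mem_sigma, mem_cliqueFinset_iff, mem_commonNeighborFinset] at hp ⊢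
    refine ⟨hp.1.erase_of_mem hp.2, fun v hv => ?_⟩
    exact hp.1.isClique hp.2 (mem_of_mem_erase hv) (ne_of_mem_erase hv).symm
  · rintro ⟨S, u⟩ hp
    simp only [mem_sigma, mem_commonNeighborFinset] at hp
    simp [erase_insert fun hu => (hp.2 u hu).ne rfl]
  · rintro ⟨K, u⟩ hp
    simp [insert_erase (mem_sigma.1 hp).2]
  · rintro ⟨S, u⟩ hp
    simp only [mem_sigma, mem_commonNeighborFinset] at hp
    simp [erase_insert fun hu => (hp.2 u hu).ne rfl]

lemma sum_card_commonNeighborFinset (h : ℕ) :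
    ∑ S ∈ G.cliqueFinset h, #(G.commonNeighborFinset S) =
      (h + 1) * #(G.cliqueFinset (h + 1)) := by
  have := G.sum_cliqueFinset_sum_commonNeighborFinset h fun _ _ => 1
  simp only [sum_const, smul_eq_mul, mul_one] at this
  rw [this, sum_congr rfl fun K hK => (mem_cliqueFinset_iff.1 hK).card_eq, sum_const, smul_eq_mul,
    mul_comm]

lemma sum_sq_card_commonNeighborFinset (h : ℕ) :
    ∑ S ∈ G.cliqueFinset h, #(G.commonNeighborFinset S) ^ 2 =
      ∑ K ∈ G.cliqueFinset (h + 1), ∑ x ∈ K, #(G.commonNeighborFinset (K.erase x)) := by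
  rw [← G.sum_cliqueFinset_sum_commonNeighborFinset h fun S _ => #(G.commonNeighborFinset S)]
  simp [sq]

/-- A vertex adjacent to all of `K.erase a` and all of `K.erase b` for `a ≠ b` is adjacent to all
of `K`; so outside `commonNeighborFinset K` a vertex is counted at most once on the left. -/
lemma sum_card_commonNeighborFinset_erase_le {h : ℕ} {K : Finset V} (hK : #K = h + 1) :
    ∑ x ∈ K, #(G.commonNeighborFinset (K.erase x)) ≤
      Fintype.card V + h * #(G.commonNeighborFinset K) := by
  have hcount (u : V) : #{x ∈ K | u ∈ G.commonNeighborFinset (K.erase x)} ≤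
      1 + h * if u ∈ G.commonNeighborFinset K then 1 else 0 := by
    split_ifs with hu
    · exact (card_filter_le _ _).trans (by omega)
    · refine le_add_right (card_le_one.2 fun a ha b hb => ?_)
      by_contra hab
      simp only [mem_filter, mem_commonNeighborFinset, mem_erase] at ha hb hu
      push Not at hu
      obtain ⟨v, hv, hnadj⟩ := hu
      by_cases hva : v = a
      · exact hnadj (hb.2 v ⟨hva ▸ hab, hv⟩)
      · exact hnadj (ha.2 v ⟨hva, hv⟩)
  calc ∑ x ∈ K, #(G.commonNeighborFinset (K.erase x))
      = ∑ u, #{x ∈ K | u ∈ G.commonNeighborFinset (K.erase x)} := by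
        simp only [card_filter]
        rw [sum_comm]
        simp only [← card_filter, filter_univ_mem]
    _ ≤ ∑ u, (1 + h * if u ∈ G.commonNeighborFinset K then 1 else 0) :=
        sum_le_sum fun u _ => hcount u
    _ = Fintype.card V + h * #(G.commonNeighborFinset K) := by
        rw [sum_add_distrib, ← mul_sum, ← card_filter, filter_univ_mem, sum_const, card_univ,
          smul_eq_mul, mul_one]

lemma sum_sq_card_commonNeighborFinset_le (h : ℕ) :
    ∑ S ∈ G.cliqueFinset h, #(G.commonNeighborFinset S) ^ 2 ≤
      Fintype.card V * #(G.cliqueFinset (h + 1)) + h * ((h + 2) * #(G.cliqueFinset (h + 2))) := by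
  rw [sum_sq_card_commonNeighborFinset, ← sum_card_commonNeighborFinset, mul_sum, mul_comm,
    ← smul_eq_mul, ← sum_const, ← sum_add_distrib]
  exact sum_le_sum fun K hK =>
    sum_card_commonNeighborFinset_erase_le (mem_cliqueFinset_iff.1 hK).card_eq

theorem moon_moser (h : ℕ) :
    ((h + 1) * #(G.cliqueFinset (h + 1))) ^ 2 ≤ #(G.cliqueFinset h) *
      (Fintype.card V * #(G.cliqueFinset (h + 1)) + h * ((h + 2) * #(G.cliqueFinset (h + 2)))) :=
  calc ((h + 1) * #(G.cliqueFinset (h + 1))) ^ 2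
      = (∑ S ∈ G.cliqueFinset h, #(G.commonNeighborFinset S)) ^ 2 := by
        rw [sum_card_commonNeighborFinset]
    _ ≤ #(G.cliqueFinset h) * ∑ S ∈ G.cliqueFinset h, #(G.commonNeighborFinset S) ^ 2 :=
        sq_sum_le_card_mul_sum_sq
    _ ≤ _ := Nat.mul_le_mul_left _ (sum_sq_card_commonNeighborFinset_le h)

lemma card_cliqueFinset_two : #(G.cliqueFinset 2) = #G.edgeFinset := by
  have := G.sum_card_commonNeighborFinset 1
  simp only [sum_cliqueFinset_one, commonNeighborFinset_singleton, Nat.reduceAdd,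
    card_neighborFinset_eq_degree, sum_degrees_eq_twice_card_edges] at this
  omega

lemma sum_degree_sq_le_s13 :
    ∑ v, G.degree v ^ 2 ≤ Fintype.card V * #G.edgeFinset + 3 * #(G.cliqueFinset 3) := by
  have := G.sum_sq_card_commonNeighborFinset_le 1
  simpa [sum_cliqueFinset_one, commonNeighborFinset_singleton, card_cliqueFinset_two] using this

lemma card_cliqueFinset_pos_of_le {h l : ℕ} (hhl : h ≤ l) (hl : 0 < #(G.cliqueFinset l)) :
    0 < #(G.cliqueFinset h) := by
  by_contra! h0
  rw [Nat.le_zero, card_eq_zero, cliqueFinset_eq_empty_iff] at h0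
  simp [cliqueFinset_eq_empty_iff.2 (h0.mono hhl)] at hl

theorem card_cliqueFinset_ratio_ge {θ : ℝ} (hθ0 : θ ≠ 0) (hE : 0 < #G.edgeFinset)
    (hθ : (θ - 2) * Fintype.card V / θ =
      (∑ v, (G.degree v : ℝ) ^ 2) / #G.edgeFinset - Fintype.card V) :
    ∀ h : ℕ, 2 ≤ h → 0 < #(G.cliqueFinset h) →
      (θ - h) * Fintype.card V / (θ * (h + 1)) ≤
        (#(G.cliqueFinset (h + 1)) : ℝ) / #(G.cliqueFinset h) := by
  intro h hh
  induction h, hh using Nat.le_induction with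
  | base =>
    intro _
    have hsq : ∑ v, (G.degree v : ℝ) ^ 2 ≤
        Fintype.card V * #G.edgeFinset + 3 * #(G.cliqueFinset 3) := by
      exact_mod_cast G.sum_degree_sq_le_s13
    calc (θ - (2 : ℕ)) * Fintype.card V / (θ * ((2 : ℕ) + 1))
        = ((∑ v, (G.degree v : ℝ) ^ 2) - Fintype.card V * #G.edgeFinset) / 3 /
            #G.edgeFinset := by
          rw [Nat.cast_two, two_add_one_eq_three, ← div_div, hθ]
          field_simp
      _ ≤ #(G.cliqueFinset 3) / #(G.cliqueFinset 2) := by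
          rw [card_cliqueFinset_two]
          gcongr
          linarith
  | succ h hh ih =>
    intro hpos
    have hpos' := card_cliqueFinset_pos_of_le h.le_succ hpos
    have hmm := G.moon_moser h
    rw [← Nat.cast_le (α := ℝ)] at hmm
    push_cast at hmm ⊢
    exact ratio_bound_succ (by omega) hθ0 (by exact_mod_cast hpos') (by exact_mod_cast hpos) hmm
      (ih hpos')

end SimpleGraph

theorem moon_moser_theta {V : Type*} [Fintype V] [DecidableEq V]
    (G : SimpleGraph V) [DecidableRel G.Adj]
    (n m k : ℕ) (hn : n = Fintype.card V) (hm : m = G.edgeFinset.card) (hm0 : 0 < m)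
    (hfree : G.CliqueFree k)
    (c : ℕ → ℕ) (hc : ∀ h, c h = (G.cliqueFinset h).card)
    (θ : ℝ) (hθ0 : θ ≠ 0)
    (hθ : (θ - 2) * n / θ = (∑ i, (G.degree i : ℝ) ^ 2) / m - n) :
    (∀ h : ℕ, 2 ≤ h → 0 < c h →
      (θ - h) * n / (θ * (h + 1)) ≤ (c (h + 1) : ℝ) / (c h)) ∧ θ ≤ (k : ℝ) - 1 := by
  subst hn hm
  obtain rfl : c = fun h => #(G.cliqueFinset h) := funext hc
  have hratio := G.card_cliqueFinset_ratio_ge hθ0 hm0 hθ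
  refine ⟨hratio, ?_⟩
  have hV : (0 : ℝ) < Fintype.card V := by
    have := hm0.trans_le G.card_edgeFinset_le_card_choose_two
    exact_mod_cast Nat.pos_of_ne_zero fun hV => by simp [hV] at this
  by_contra! hk
  have hCk := pos_of_ratio_bound hV (G.card_cliqueFinset_two ▸ hm0) hratio k
    (G.two_le_of_cliqueFree hm0 hfree) (by linarith)
  simp [SimpleGraph.cliqueFinset_eq_empty_iff.2 hfree] at hCk
end

section
/- For any connected graph G with n vertices, m edges and radius r, one has n/(2ν) ≥ m/(n - r), where ν = n(Σ_i d_i²)/(4m²). Consequently H(G) ≥ m/(n-r). -/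
/-!
Every vertex `i` has `d_i` neighbours, all at distance `1`, and for each `k ≠ 1` with
`k ≤ ecc(i)` some vertex at distance `k`; hence `d_i + ecc(i) ≤ n` and so `d_i ≤ n - r`.
Both inequalities follow from this degree bound alone: it gives
`∑ d_i² ≤ (n - r) ∑ d_i = 2m(n - r)`, i.e. `n / (2ν) = 2m² / ∑ d_i² ≥ m / (n - r)`,
and every edge term `2 / (d_i + d_j)` of `H` is at least `1 / (n - r)`.
-/

open Finset

namespace SimpleGraph

variable {V : Type*} {G : SimpleGraph V}

lemma Reachable.exists_dist_eq_of_le {u v : V} (h : G.Reachable u v) {k : ℕ}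
    (hk : k ≤ G.dist u v) : ∃ w, G.dist u w = k := by
  obtain ⟨p, hp⟩ := h.exists_walk_length_eq_dist
  refine ⟨p.getVert k, le_antisymm ?_ ?_⟩
  · simpa [hp, hk] using dist_le (p.take k)
  · have htriangle := (p.take k).reachable.dist_triangle_left v
    have hdrop := dist_le (p.drop k)
    rw [Walk.drop_length] at hdrop
    omega

variable [Fintype V] [DecidableRel G.Adj]

lemma degree_add_dist_le_card (i v : V) : G.degree i + G.dist i v ≤ Fintype.card V := by
  by_cases hiv : G.Reachable i v
  swap
  · rw [dist_eq_zero_of_not_reachable hiv]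
    exact (G.degree_lt_card_verts i).le
  have hnbr : #{j | G.dist i j = 1} = G.degree i := by
    rw [← card_neighborFinset_eq_degree]
    congr 1
    ext j
    simp [dist_eq_one_iff_adj]
  have hfar : (range (G.dist i v + 1)).erase 1 ⊆
      (univ.filter fun j => ¬G.dist i j = 1).image (G.dist i) := by
    intro k hk
    obtain ⟨hk1, hk⟩ := mem_erase.mp hk
    obtain ⟨w, hw⟩ := hiv.exists_dist_eq_of_le (Nat.lt_succ_iff.mp (mem_range.mp hk))
    exact mem_image.mpr ⟨w, mem_filter.mpr ⟨mem_univ w, by rwa [hw]⟩, hw⟩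
  have hsplit := card_filter_add_card_filter_not (s := univ) (fun j => G.dist i j = 1)
  have herase := pred_card_le_card_erase (s := range (G.dist i v + 1)) (a := 1)
  have hfar_card := (card_le_card hfar).trans card_image_le
  rw [card_range, card_univ] at *
  omega

lemma degree_add_iSup_dist_le_card (i : V) :
    G.degree i + ⨆ j, G.dist i j ≤ Fintype.card V := by
  have : Nonempty V := ⟨i⟩
  have hsup : ⨆ j, G.dist i j ≤ Fintype.card V - G.degree i :=
    ciSup_le fun j => by have := G.degree_add_dist_le_card i j; omega
  have := G.degree_lt_card_verts i
  omega

lemma sum_degree_eq_two_mul_card_edgeFinset :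
    ∑ i, (G.degree i : ℝ) = 2 * #G.edgeFinset := by
  exact_mod_cast G.sum_degrees_eq_twice_card_edges

lemma two_mul_card_edgeFinset_le_sum_sq_degree :
    2 * (#G.edgeFinset : ℝ) ≤ ∑ i, (G.degree i : ℝ) ^ 2 := by
  rw [← sum_degree_eq_two_mul_card_edgeFinset]
  gcongr with i
  exact_mod_cast Nat.le_self_pow two_ne_zero _

lemma sum_sq_degree_le {D : ℝ} (h : ∀ i, (G.degree i : ℝ) ≤ D) :
    ∑ i, (G.degree i : ℝ) ^ 2 ≤ 2 * #G.edgeFinset * D := by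
  rw [← sum_degree_eq_two_mul_card_edgeFinset, sum_mul]
  gcongr with i
  rw [sq]
  exact mul_le_mul_of_nonneg_left (h i) (Nat.cast_nonneg _)

variable (G) in
noncomputable def harmonicIndex : ℝ :=
  ∑ e ∈ G.edgeFinset, Sym2.lift ⟨fun i j => 2 / ((G.degree i : ℝ) + (G.degree j : ℝ)),
    fun i j => by simp [add_comm]⟩ e

lemma card_edgeFinset_div_le_harmonicIndex {D : ℝ} (h : ∀ i, (G.degree i : ℝ) ≤ D) :
    (#G.edgeFinset : ℝ) / D ≤ G.harmonicIndex := by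
  have hterm : ∀ e ∈ G.edgeFinset, 1 / D ≤
      Sym2.lift ⟨fun i j => 2 / ((G.degree i : ℝ) + (G.degree j : ℝ)),
        fun i j => by simp [add_comm]⟩ e := by
    intro e he
    induction e using Sym2.ind with
    | _ a b =>
      have hab : G.Adj a b := by simpa using he
      have ha : (1 : ℝ) ≤ G.degree a := by
        exact_mod_cast (G.degree_pos_iff_exists_adj a).mpr ⟨b, hab⟩
      have hb := h b
      have ha' := h a
      rw [Sym2.lift_mk, div_le_div_iff₀ (by linarith) (by positivity)]
      linarith
  have := card_nsmul_le_sum _ _ _ hterm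
  rwa [nsmul_eq_mul, ← div_eq_mul_one_div] at this

end SimpleGraph

theorem radius_bound {V : Type*} [Fintype V] (G : SimpleGraph V) [DecidableRel G.Adj]
    (n m r : ℕ) (hn : n = Fintype.card V) (hm : m = G.edgeFinset.card) (hm0 : 0 < m)
    (hr : r = ⨅ i, ⨆ j, G.dist i j)
    (ν H : ℝ) (hν : ν = n * (∑ i, (G.degree i : ℝ) ^ 2) / (4 * m ^ 2))
    (hH : H = ∑ e ∈ G.edgeFinset,
        Sym2.lift ⟨fun i j => 2 / ((G.degree i : ℝ) + (G.degree j : ℝ)),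
          fun i j => by simp [add_comm]⟩ e) :
    (m : ℝ) / (n - r) ≤ n / (2 * ν) ∧ (m : ℝ) / (n - r) ≤ H := by
  have hdeg : ∀ i, (G.degree i : ℝ) ≤ n - r := fun i => by
    have hecc := G.degree_add_iSup_dist_le_card i
    have hrad : r ≤ ⨆ j, G.dist i j := hr ▸ ciInf_le (OrderBot.bddBelow _) i
    have : G.degree i + r ≤ n := by omega
    rw [le_sub_iff_add_le]
    exact_mod_cast this
  have hupper : ∑ i, (G.degree i : ℝ) ^ 2 ≤ 2 * m * (n - r) := hm ▸ G.sum_sq_degree_le hdeg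
  have hlower : 2 * (m : ℝ) ≤ ∑ i, (G.degree i : ℝ) ^ 2 :=
    hm ▸ G.two_mul_card_edgeFinset_le_sum_sq_degree
  have hm0' : (0 : ℝ) < m := by exact_mod_cast hm0
  have hD : (1 : ℝ) ≤ n - r := by nlinarith
  refine ⟨?_, hH ▸ hm ▸ G.card_edgeFinset_div_le_harmonicIndex hdeg⟩
  have hn0 : (0 : ℝ) < n := by linarith [(Nat.cast_nonneg r : (0 : ℝ) ≤ r)]
  have hS : 0 < ∑ i, (G.degree i : ℝ) ^ 2 := by linarith
  rw [hν, div_le_div_iff₀ (by linarith) (by positivity)]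
  field_simp
  nlinarith
end

section
/- For any simple graph G with n vertices, m > 0 edges, maximum degree Δ, minimum degree δ and average degree d = 2m/n, the irregularity ν = n(Σ_i d_i²)/(4m²) satisfies ν ≤ 1 + ((Δ - δ)/(2d))². -/
/-!
Popoviciu's inequality in its finite form: if `a ≤ xᵢ ≤ b`, then `∑ (xᵢ - a)(b - xᵢ) ≥ 0`
bounds `∑ xᵢ²` linearly in `∑ xᵢ`, and completing the square gives
`n ∑ xᵢ² - (∑ xᵢ)² ≤ (n (b - a) / 2)²`. For the degrees of `G`, where `∑ dᵢ = 2m`, this reads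
`n ∑ dᵢ² ≤ 4m² + (n (Δ - δ) / 2)²`; dividing by `4m²` gives the bound on `ν`.
-/

open Finset

section Popoviciu

variable {ι R : Type*} {s : Finset ι} {f : ι → R} {a b : R}

theorem Finset.sum_sq_le_of_mem_Icc [CommRing R] [LinearOrder R] [IsStrictOrderedRing R]
    (h : ∀ i ∈ s, f i ∈ Set.Icc a b) :
    ∑ i ∈ s, f i ^ 2 ≤ (a + b) * ∑ i ∈ s, f i - #s * (a * b) := by
  have hprod : 0 ≤ ∑ i ∈ s, (b - f i) * (f i - a) :=
    sum_nonneg fun i hi ↦ mul_nonneg (sub_nonneg.2 (h i hi).2) (sub_nonneg.2 (h i hi).1)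
  have hexpand : ∑ i ∈ s, (b - f i) * (f i - a) =
      (a + b) * ∑ i ∈ s, f i - #s * (a * b) - ∑ i ∈ s, f i ^ 2 := by
    simp only [mul_sum, ← nsmul_eq_mul, ← sum_const, ← sum_sub_distrib]
    exact sum_congr rfl fun _ _ ↦ by ring
  linarith

theorem Finset.card_mul_sum_sq_le_sq_sum_add [Field R] [LinearOrder R] [IsStrictOrderedRing R]
    (h : ∀ i ∈ s, f i ∈ Set.Icc a b) :
    #s * ∑ i ∈ s, f i ^ 2 ≤ (∑ i ∈ s, f i) ^ 2 + (#s * (b - a) / 2) ^ 2 := by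
  have hcard : (0 : R) ≤ #s := Nat.cast_nonneg _
  calc #s * ∑ i ∈ s, f i ^ 2 ≤ #s * ((a + b) * ∑ i ∈ s, f i - #s * (a * b)) :=
        mul_le_mul_of_nonneg_left (sum_sq_le_of_mem_Icc h) hcard
    _ = (∑ i ∈ s, f i) ^ 2 + (#s * (b - a) / 2) ^ 2
          - (∑ i ∈ s, f i - #s * (a + b) / 2) ^ 2 := by ring
    _ ≤ (∑ i ∈ s, f i) ^ 2 + (#s * (b - a) / 2) ^ 2 := sub_le_self _ (sq_nonneg _)

end Popoviciu

namespace SimpleGraph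

variable {V : Type*} [Fintype V] (G : SimpleGraph V) [DecidableRel G.Adj]

theorem card_mul_sum_degree_sq_le :
    Fintype.card V * ∑ v, (G.degree v : ℝ) ^ 2 ≤
      (2 * #G.edgeFinset : ℝ) ^ 2 +
        (Fintype.card V * ((G.maxDegree : ℝ) - G.minDegree) / 2) ^ 2 := by
  have hbounds : ∀ v ∈ (univ : Finset V),
      (G.degree v : ℝ) ∈ Set.Icc (G.minDegree : ℝ) G.maxDegree := fun v _ ↦
    ⟨Nat.cast_le.2 (G.minDegree_le_degree v), Nat.cast_le.2 (G.degree_le_maxDegree v)⟩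
  have hsum : ∑ v, (G.degree v : ℝ) = 2 * #G.edgeFinset := by
    exact_mod_cast G.sum_degrees_eq_twice_card_edges
  simpa only [card_univ, hsum] using card_mul_sum_sq_le_sq_sum_add hbounds

end SimpleGraph

theorem nu_upper_popoviciu {V : Type*} [Fintype V] (G : SimpleGraph V) [DecidableRel G.Adj]
    (n m : ℕ) (hn : n = Fintype.card V) (hm : m = G.edgeFinset.card) (hm0 : 0 < m)
    (Δ δ : ℕ) (hΔ : Δ = G.maxDegree) (hδ : δ = G.minDegree)
    (d : ℝ) (hd : d = 2 * m / n)
    (ν : ℝ) (hν : ν = n * (∑ i, (G.degree i : ℝ) ^ 2) / (4 * m ^ 2)) :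
    ν ≤ 1 + (((Δ : ℝ) - δ) / (2 * d)) ^ 2 := by
  have hdegrees := G.card_mul_sum_degree_sq_le
  rw [← hn, ← hm, ← hΔ, ← hδ] at hdegrees
  have hn0 : n ≠ 0 := by
    have hchoose : m ≤ n.choose 2 := hm ▸ hn ▸ G.card_edgeFinset_le_card_choose_two
    rintro rfl
    simp only [Nat.choose_zero_succ, nonpos_iff_eq_zero] at hchoose
    omega
  have hmR : (0 : ℝ) < m := Nat.cast_pos.2 hm0
  have hrhs : 1 + (((Δ : ℝ) - δ) / (2 * d)) ^ 2 =
      ((2 * m : ℝ) ^ 2 + (n * ((Δ : ℝ) - δ) / 2) ^ 2) / (4 * m ^ 2) := by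
    rw [hd]; field_simp; ring
  rw [hν, hrhs]
  exact div_le_div_of_nonneg_right hdegrees (by positivity)
end
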